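/- Let f : E → ℝ be L-smooth and μ-strongly convex with 0 < μ < L, let x* be the minimizer of f, and set f̲ := f − (μ/2)‖·‖². Set ηx := 1/√(μ(L−μ)), ηu := √(μ/(L−μ)), θ := 1/(1 + √(μ/(L−μ))). Fix x₀ ∈ E and define sequences by x̲_{−1} = x̲₀ = x₀ and, for every k ≥ 0: ∇̃_{k+1} := ∇f̲(x̲_k) + θ (∇f̲(x̲_k) − ∇f̲(x̲_{k−1})); x_{k+1} := (x_k − ηx ∇̃_{k+1})/(1 + ηx μ); x̲_{k+1} := (x̲_k + ηu x_{k+1})/(1 + ηu). Then there exists a constant C > 0, depending only on L and μ, such that for every K ≥ 0: ‖x* − x_K‖² ≤ C · exp(−K/(1 + 2√(L/μ − 1))) · ‖x* − x₀‖². -/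

import Mathlib

/-!
Put `a = √μ`, `b = √(L - μ)`, `g = f - (μ/2)‖·‖²` and let `D` be the Bregman divergence of `g`.
Then `g` is convex and `b²`-smooth, hence `‖∇g p - ∇g q‖² ≤ 2b² D(p, q)`, and `∇g x* = -μ x*`.
The energy
  `W_k = a²b²‖x_k - x*‖² + 2b² D(x̲_k, x*) - 2abθ ⟪∇g x̲_k - ∇g x̲_{k-1}, x_k - x*⟫`
    `+ 2θb² D(x̲_{k-1}, x̲_k)`
satisfies `W_{k+1} ≤ θ W_k` with `θ = b/(a+b)`: `W_{k+1} - θ W_k` is an explicit nonpositive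
expression once the cross term `⟪∇g x̲_k - ∇g x̲_{k-1}, x_{k+1} - x_k⟫` is absorbed by Young's
inequality and cocoercivity. The same two tools give `W_k ≥ a²b²(1 - θ)‖x_k - x*‖²`, while
`W_0 ≤ b²L‖x₀ - x*‖²` and `θ ≤ exp(-a/(a + 2b))`.
-/

open scoped RealInnerProductSpace

section

variable {E : Type*} [NormedAddCommGroup E] [InnerProductSpace ℝ E]

def bregmanDiv (g : E → ℝ) (G : E → E) (p q : E) : ℝ := g p - g q - ⟪G q, p - q⟫

@[simp] lemma bregmanDiv_self (g : E → ℝ) (G : E → E) (p : E) : bregmanDiv g G p p = 0 := by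
  simp [bregmanDiv]

lemma bregmanDiv_sub (g₁ g₂ : E → ℝ) (G₁ G₂ : E → E) (p q : E) :
    bregmanDiv (fun z => g₁ z - g₂ z) (fun z => G₁ z - G₂ z) p q
      = bregmanDiv g₁ G₁ p q - bregmanDiv g₂ G₂ p q := by
  simp only [bregmanDiv, inner_sub_left]
  ring

lemma bregmanDiv_half_mul_norm_sq (c : ℝ) (p q : E) :
    bregmanDiv (fun z => c / 2 * ‖z‖ ^ 2) (fun z => c • z) p q = c / 2 * ‖p - q‖ ^ 2 := by
  simp only [bregmanDiv, real_inner_smul_left, norm_sub_sq_real, inner_sub_right,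
    real_inner_self_eq_norm_sq, real_inner_comm p q]
  ring

lemma norm_sub_sq_le_bregmanDiv {g : E → ℝ} {G : E → E} {β : ℝ} (hβ : 0 < β)
    (hnonneg : ∀ p q, 0 ≤ bregmanDiv g G p q)
    (hsmooth : ∀ p q, bregmanDiv g G p q ≤ β / 2 * ‖p - q‖ ^ 2) (p q : E) :
    ‖G p - G q‖ ^ 2 ≤ 2 * β * bregmanDiv g G p q := by
  set d := G p - G q with hd_def
  have h₁ := hsmooth (p - β⁻¹ • d) p
  have h₂ := hnonneg (p - β⁻¹ • d) q
  have hd : β⁻¹ * ⟪G p, d⟫ - β⁻¹ * ⟪G q, d⟫ = 2 * (‖d‖ ^ 2 / (2 * β)) := by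
    rw [← mul_sub, ← inner_sub_left, ← hd_def, real_inner_self_eq_norm_sq]
    field_simp
  have hquad : β / 2 * ‖p - β⁻¹ • d - p‖ ^ 2 = ‖d‖ ^ 2 / (2 * β) := by
    rw [sub_sub_cancel_left, norm_neg, norm_smul, mul_pow, Real.norm_eq_abs, sq_abs]
    field_simp
  rw [bregmanDiv, hquad, sub_sub_cancel_left, inner_neg_right, real_inner_smul_right] at h₁
  rw [bregmanDiv, sub_right_comm p, inner_sub_right, real_inner_smul_right] at h₂
  have key : ‖d‖ ^ 2 / (2 * β) ≤ bregmanDiv g G p q := by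
    rw [bregmanDiv]
    linarith
  rwa [div_le_iff₀ (by positivity), mul_comm] at key

lemma bregmanDiv_four_point {g : E → ℝ} {G : E → E} {a b : ℝ} {P A A' X' : E}
    (h : (a + b) • A' = b • A + a • X') :
    (a + b) * bregmanDiv g G A' P - b * bregmanDiv g G A P + b * bregmanDiv g G A A'
      + a * bregmanDiv g G P A' = a * ⟪G A' - G P, X' - P⟫ := by
  have hP : (a + b) • (A' - P) - b • (A - P) = a • (X' - P) := by
    linear_combination (norm := module) h
  have hA' : b • (A - A') + a • (P - A') = -(a • (X' - P)) := by
    linear_combination (norm := module) -h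
  have eP := congrArg (⟪G P, ·⟫) hP
  have eA' := congrArg (⟪G A', ·⟫) hA'
  simp only [inner_sub_right, inner_add_right, inner_neg_right, real_inner_smul_right] at eP eA'
  simp only [bregmanDiv, inner_sub_left, inner_sub_right]
  linear_combination -eA' - eP

lemma norm_smul_add_smul_sq (s t : ℝ) (u v : E) :
    ‖s • u + t • v‖ ^ 2 = s ^ 2 * ‖u‖ ^ 2 + 2 * (s * t) * ⟪u, v⟫ + t ^ 2 * ‖v‖ ^ 2 := by
  rw [norm_add_sq_real, norm_smul, norm_smul, real_inner_smul_left, real_inner_smul_right,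
    mul_pow, mul_pow, Real.norm_eq_abs, Real.norm_eq_abs, sq_abs, sq_abs]
  ring

section Gradient

variable [CompleteSpace E]

lemma hasGradientAt_half_mul_norm_sq (c : ℝ) (z : E) :
    HasGradientAt (fun w => c / 2 * ‖w‖ ^ 2) (c • z) z := by
  rw [hasGradientAt_iff_hasFDerivAt]
  refine ((hasStrictFDerivAt_norm_sq z).hasFDerivAt.const_mul (c / 2)).congr_fderiv ?_
  ext w
  simp
  ring

lemma HasGradientAt.sub {g₁ g₂ : E → ℝ} {G₁ G₂ z : E} (h₁ : HasGradientAt g₁ G₁ z)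
    (h₂ : HasGradientAt g₂ G₂ z) : HasGradientAt (fun w => g₁ w - g₂ w) (G₁ - G₂) z := by
  rw [hasGradientAt_iff_hasFDerivAt, map_sub]
  exact h₁.hasFDerivAt.sub h₂.hasFDerivAt

lemma HasGradientAt.hasDerivAt_comp_add_smul {φ : E → ℝ} {φ' p d : E} {t : ℝ}
    (h : HasGradientAt φ φ' (p + t • d)) :
    HasDerivAt (fun s : ℝ => φ (p + s • d)) ⟪φ', d⟫ t := by
  have hline : HasDerivAt (fun s : ℝ => p + s • d) d t := by
    simpa using ((hasDerivAt_id t).smul_const d).const_add p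
  simpa [Function.comp_def] using h.hasFDerivAt.comp_hasDerivAt t hline

lemma ConvexOn.bregmanDiv_nonneg {φ : E → ℝ} {φ' : E → E} (h : ∀ z, HasGradientAt φ (φ' z) z)
    (hφ : ConvexOn ℝ Set.univ φ) (p q : E) : 0 ≤ bregmanDiv φ φ' p q := by
  have hline : ConvexOn ℝ Set.univ fun t : ℝ => φ (q + t • (p - q)) := by
    have := hφ.comp_affineMap (AffineMap.lineMap q p : ℝ →ᵃ[ℝ] E)
    rw [Set.preimage_univ] at this
    have hfun : (fun t : ℝ => φ (q + t • (p - q))) = φ ∘ AffineMap.lineMap q p := by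
      ext t
      simp [AffineMap.lineMap_apply_module', add_comm, smul_sub]
    rwa [hfun]
  have hslope := hline.le_slope_of_hasDerivAt (Set.mem_univ 0) (Set.mem_univ 1) one_pos
    (h _).hasDerivAt_comp_add_smul
  simp only [slope_def_field, one_smul, zero_smul, add_zero, sub_zero, div_one,
    add_sub_cancel] at hslope
  rw [bregmanDiv]
  linarith

lemma bregmanDiv_nonneg_of_monotone {φ : E → ℝ} {φ' : E → E}
    (h : ∀ z, HasGradientAt φ (φ' z) z) (hmono : ∀ z w, 0 ≤ ⟪φ' z - φ' w, z - w⟫) (p q : E) :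
    0 ≤ bregmanDiv φ φ' p q := by
  obtain ⟨c, hc, hslope⟩ := exists_hasDerivAt_eq_slope (fun t : ℝ => φ (q + t • (p - q)))
      (fun t => ⟪φ' (q + t • (p - q)), p - q⟫) one_pos
      (fun _ _ => (h _).hasDerivAt_comp_add_smul.continuousAt.continuousWithinAt)
      (fun _ _ => (h _).hasDerivAt_comp_add_smul)
  simp only [one_smul, zero_smul, add_zero, sub_zero, div_one, add_sub_cancel] at hslope
  have hc_mono := hmono (q + c • (p - q)) q
  rw [add_sub_cancel_left, real_inner_smul_right, inner_sub_left] at hc_mono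
  rw [bregmanDiv]
  nlinarith [hc.1]

lemma bregmanDiv_le_of_lipschitz {f : E → ℝ} {f' : E → E} {L : ℝ}
    (hf : ∀ z, HasGradientAt f (f' z) z) (hL : ∀ z w, ‖f' z - f' w‖ ≤ L * ‖z - w‖) (p q : E) :
    bregmanDiv f f' p q ≤ L / 2 * ‖p - q‖ ^ 2 := by
  have hmono : ∀ z w, 0 ≤ ⟪(L • z - f' z) - (L • w - f' w), z - w⟫ := by
    intro z w
    have e : (L • z - f' z) - (L • w - f' w) = L • (z - w) - (f' z - f' w) := by module
    rw [e, inner_sub_left, real_inner_smul_left, real_inner_self_eq_norm_sq]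
    nlinarith [real_inner_le_norm (f' z - f' w) (z - w), hL z w, norm_nonneg (z - w)]
  have h := bregmanDiv_nonneg_of_monotone
    (fun z => (hasGradientAt_half_mul_norm_sq L z).sub (hf z)) hmono p q
  rw [bregmanDiv_sub, bregmanDiv_half_mul_norm_sq] at h
  linarith

lemma bregmanDiv_sub_half_mul_norm_sq_le {f : E → ℝ} {f' : E → E} {c d : ℝ}
    (hf : ∀ z, HasGradientAt f (f' z) z) (hL : ∀ z w, ‖f' z - f' w‖ ≤ (c + d) * ‖z - w‖)
    (p q : E) :
    bregmanDiv (fun w => f w - c / 2 * ‖w‖ ^ 2) (fun w => f' w - c • w) p q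
      ≤ d / 2 * ‖p - q‖ ^ 2 := by
  rw [bregmanDiv_sub, bregmanDiv_half_mul_norm_sq]
  linarith [bregmanDiv_le_of_lipschitz hf hL p q]

lemma IsLocalMin.hasGradientAt_eq_zero {f : E → ℝ} {f' x : E} (h : IsLocalMin f x)
    (hf : HasGradientAt f f' x) : f' = 0 :=
  (InnerProductSpace.toDual ℝ E).map_eq_zero_iff.mp (h.hasFDerivAt_eq_zero hf.hasFDerivAt)

end Gradient

section Lyapunov

variable {g : E → ℝ} {G : E → E}

-- `W_k = lyapunov g G a b θ x* (x k) (xl k) (xl (k - 1))`.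
def lyapunov (g : E → ℝ) (G : E → E) (a b τ : ℝ) (P X A Am : E) : ℝ :=
  (a * b) ^ 2 * ‖X - P‖ ^ 2 + 2 * b ^ 2 * bregmanDiv g G A P
    - 2 * a * b * τ * ⟪G A - G Am, X - P⟫ + 2 * τ * b ^ 2 * bregmanDiv g G Am A

lemma lyapunov_step_eq {a b τ : ℝ} (hτ : τ * (a + b) = b) {P X X' A A' Am : E}
    (hP : G P = -(a ^ 2) • P)
    (hX : (a * b + a ^ 2) • X' = (a * b) • X - ((1 + τ) • G A - τ • G Am))
    (hA : (a + b) • A' = b • A + a • X') :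
    lyapunov g G a b τ P X' A' A - τ * lyapunov g G a b τ P X A Am
      = -(2 * a * b * τ * bregmanDiv g G P A' + 2 * a * b * τ ^ 2 * ⟪G A - G Am, X' - X⟫
        + τ * a ^ 3 * b * ‖X' - P‖ ^ 2 + τ * a ^ 2 * b ^ 2 * ‖X' - X‖ ^ 2
        + 2 * τ ^ 2 * b ^ 2 * bregmanDiv g G Am A) := by
  have hfour := bregmanDiv_four_point (g := g) (G := G) (P := P) hA
  have hdir : (1 + τ) • G A - τ • G Am - G P = (a * b) • (X - X') - a ^ 2 • (X' - P) := by
    linear_combination (norm := module) hX - hP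
  have hdir_inner : ⟪(1 + τ) • G A - τ • G Am - G P, X' - P⟫
      = a * b * ⟪X - X', X' - P⟫ - a ^ 2 * ‖X' - P‖ ^ 2 := by
    rw [hdir, inner_sub_left, real_inner_smul_left, real_inner_smul_left,
      real_inner_self_eq_norm_sq]
  have hsplit : ⟪(1 + τ) • G A - τ • G Am - G P, X' - P⟫ = ⟪G A' - G P, X' - P⟫
      - ⟪G A' - G A, X' - P⟫ + τ * ⟪G A - G Am, X - P⟫ + τ * ⟪G A - G Am, X' - X⟫ := by
    simp only [inner_sub_left, real_inner_smul_left, inner_sub_right]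
    ring
  have hthree : ‖X - P‖ ^ 2 = ‖X' - X‖ ^ 2 + 2 * ⟪X - X', X' - P⟫ + ‖X' - P‖ ^ 2 := by
    rw [← norm_sub_rev X, ← norm_add_sq_real, sub_add_sub_cancel]
  unfold lyapunov
  linear_combination (2 * b * τ) * (hfour - a * hsplit + a * hdir_inner - (a ^ 2 * b / 2) * hthree)
    - (2 * b * bregmanDiv g G A' P + a ^ 2 * b * ‖X' - P‖ ^ 2) * hτ

variable (hnonneg : ∀ p q, 0 ≤ bregmanDiv g G p q)
include hnonneg

lemma lyapunov_step_le {a b τ : ℝ} (ha : 0 < a) (hb : 0 < b) (hτ : τ * (a + b) = b)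
    (hco : ∀ p q, ‖G p - G q‖ ^ 2 ≤ 2 * b ^ 2 * bregmanDiv g G p q) {P X X' A A' Am : E}
    (hP : G P = -(a ^ 2) • P)
    (hX : (a * b + a ^ 2) • X' = (a * b) • X - ((1 + τ) • G A - τ • G Am))
    (hA : (a + b) • A' = b • A + a • X') :
    lyapunov g G a b τ P X' A' A ≤ τ * lyapunov g G a b τ P X A Am := by
  have hτ0 : 0 ≤ τ := by nlinarith
  have hτ1 : τ ≤ 1 := by nlinarith
  have young := mul_nonneg hτ0 (sq_nonneg ‖τ • (G A - G Am) + (a * b) • (X' - X)‖)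
  rw [norm_smul_add_smul_sq] at young
  have hcoA : τ ^ 3 * ‖G A - G Am‖ ^ 2 ≤ τ ^ 2 * (2 * b ^ 2 * bregmanDiv g G Am A) := by
    rw [norm_sub_rev]
    exact mul_le_mul (pow_le_pow_of_le_one hτ0 hτ1 (by norm_num)) (hco Am A) (by positivity)
      (by positivity)
  have hPA' := mul_nonneg (by positivity : 0 ≤ 2 * a * b * τ) (hnonneg P A')
  have hX'P : 0 ≤ τ * a ^ 3 * b * ‖X' - P‖ ^ 2 := by positivity
  rw [← sub_nonpos, lyapunov_step_eq hτ hP hX hA]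
  linarith

lemma lyapunov_ge (a : ℝ) {b τ : ℝ} (hτ : 0 ≤ τ)
    (hco : ∀ p q, ‖G p - G q‖ ^ 2 ≤ 2 * b ^ 2 * bregmanDiv g G p q) (P X A Am : E) :
    (a * b) ^ 2 * (1 - τ) * ‖X - P‖ ^ 2 ≤ lyapunov g G a b τ P X A Am := by
  have young := mul_nonneg hτ (sq_nonneg ‖(1 : ℝ) • (G A - G Am) + (-(a * b)) • (X - P)‖)
  rw [norm_smul_add_smul_sq] at young
  have hcoA := mul_le_mul_of_nonneg_left (hco Am A) hτ
  rw [norm_sub_rev] at hcoA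
  have hAP := mul_nonneg (by positivity : 0 ≤ 2 * b ^ 2) (hnonneg A P)
  unfold lyapunov
  linarith

end Lyapunov

lemma lyapunov_self_le {g : E → ℝ} {G : E → E} {a b : ℝ} (τ : ℝ)
    (hsmooth : ∀ p q, bregmanDiv g G p q ≤ b ^ 2 / 2 * ‖p - q‖ ^ 2) (P X : E) :
    lyapunov g G a b τ P X X X ≤ b ^ 2 * (a ^ 2 + b ^ 2) * ‖X - P‖ ^ 2 := by
  have h := mul_le_mul_of_nonneg_left (hsmooth X P) (by positivity : 0 ≤ 2 * b ^ 2)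
  simp only [lyapunov, sub_self, inner_zero_left, bregmanDiv_self]
  nlinarith

theorem norm_sub_sq_le_pow_of_updates {g : E → ℝ} {G : E → E} {a b τ : ℝ} (ha : 0 < a)
    (hb : 0 < b) (hτ : τ * (a + b) = b) (hnonneg : ∀ p q, 0 ≤ bregmanDiv g G p q)
    (hsmooth : ∀ p q, bregmanDiv g G p q ≤ b ^ 2 / 2 * ‖p - q‖ ^ 2) {P : E}
    (hP : G P = -(a ^ 2) • P) {x xl : ℕ → E} (hxl0 : xl 0 = x 0)
    (hx : ∀ k, (a * b + a ^ 2) • x (k + 1)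
      = (a * b) • x k - ((1 + τ) • G (xl k) - τ • G (xl (k - 1))))
    (hxl : ∀ k, (a + b) • xl (k + 1) = b • xl k + a • x (k + 1)) (K : ℕ) :
    ‖x K - P‖ ^ 2 ≤ (a ^ 2 + b ^ 2) * (a + b) / a ^ 3 * τ ^ K * ‖x 0 - P‖ ^ 2 := by
  have hτ0 : 0 ≤ τ := by nlinarith
  have hco := norm_sub_sq_le_bregmanDiv (by positivity) hnonneg hsmooth
  set W : ℕ → ℝ := fun k => lyapunov g G a b τ P (x k) (xl k) (xl (k - 1))
  have hW : W K ≤ τ ^ K * W 0 :=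
    le_geom hτ0 K fun k _ => lyapunov_step_le hnonneg ha hb hτ hco hP (hx k) (hxl k)
  have hW0 : W 0 ≤ b ^ 2 * (a ^ 2 + b ^ 2) * ‖x 0 - P‖ ^ 2 := by
    simpa only [W, Nat.zero_sub, hxl0] using lyapunov_self_le τ hsmooth P (x 0)
  have hWK := lyapunov_ge hnonneg a hτ0 hco P (x K) (xl K) (xl (K - 1))
  have h1τ : (a * b) ^ 2 * (1 - τ) = a ^ 3 * b ^ 2 / (a + b) := by
    rw [eq_div_iff (by positivity)]
    linear_combination (-(a * b) ^ 2) * hτ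
  rw [h1τ] at hWK
  have hmain : a ^ 3 * b ^ 2 / (a + b) * ‖x K - P‖ ^ 2
      ≤ a ^ 3 * b ^ 2 / (a + b) * ((a ^ 2 + b ^ 2) * (a + b) / a ^ 3 * τ ^ K * ‖x 0 - P‖ ^ 2) := by
    calc _ ≤ τ ^ K * (b ^ 2 * (a ^ 2 + b ^ 2) * ‖x 0 - P‖ ^ 2) :=
          hWK.trans (hW.trans (mul_le_mul_of_nonneg_left hW0 (by positivity)))
      _ = _ := by field_simp
  exact le_of_mul_le_mul_left hmain (by positivity)

lemma smul_primal_update_eq {a b τ : ℝ} (ha : 0 < a) (hb : 0 < b) {X X' V Vm : E}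
    (h : X' = (1 + 1 / (a * b) * a ^ 2)⁻¹ • (X - (1 / (a * b)) • (V + τ • (V - Vm)))) :
    (a * b + a ^ 2) • X' = (a * b) • X - ((1 + τ) • V - τ • Vm) := by
  have hc : (a * b + a ^ 2) * (1 + 1 / (a * b) * a ^ 2)⁻¹ = a * b := by
    field_simp
  rw [h, smul_smul, hc, smul_sub, smul_smul, mul_one_div_cancel (by positivity), one_smul]
  module

lemma smul_lower_update_eq {a b : ℝ} (ha : 0 < a) (hb : 0 < b) {A A' X' : E}
    (h : A' = (1 + a / b)⁻¹ • (A + (a / b) • X')) : (a + b) • A' = b • A + a • X' := by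
  have hc : (a + b) * (1 + a / b)⁻¹ = b := by
    field_simp
    ring
  rw [h, smul_smul, hc, smul_add, smul_smul, mul_div_cancel₀ _ hb.ne']

end

lemma pow_le_exp_of_mul_add_eq {a b τ : ℝ} (ha : 0 < a) (hb : 0 < b) (hτ : τ * (a + b) = b)
    (K : ℕ) : τ ^ K ≤ Real.exp (-(K : ℝ) / (1 + 2 * (b / a))) := by
  have hτ' : τ = b / (a + b) := by field_simp; linarith
  have hstep : τ ≤ Real.exp (-(1 + 2 * (b / a))⁻¹) := by
    refine le_trans ?_ (Real.add_one_le_exp _)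
    rw [hτ', div_le_iff₀ (by positivity)]
    field_simp
    nlinarith
  calc τ ^ K ≤ Real.exp (-(1 + 2 * (b / a))⁻¹) ^ K := pow_le_pow_left₀ (by nlinarith) hstep K
    _ = _ := by rw [← Real.exp_nat_mul]; ring_nf

/-- accelerated linear convergence of the primal–dual (AGD-like) update
for minimizing an L-smooth, μ-strongly convex f; the constant C depends only on L and μ
(and the ambient space). Sequences are over ℕ; `xl (k-1)` uses truncated subtraction at
k = 0, encoding x̲₋₁ = x̲₀ = x₀. -/
theorem stmt3 {E : Type*} [NormedAddCommGroup E] [InnerProductSpace ℝ E] [CompleteSpace E]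
    (L μ : ℝ) (hμ : 0 < μ) (hμL : μ < L) :
    ∃ C : ℝ, 0 < C ∧
      ∀ (f : E → ℝ) (f' : E → E),
        (∀ x, HasGradientAt f (f' x) x) →
        (∀ x y, ‖f' x - f' y‖ ≤ L * ‖x - y‖) →
        ConvexOn ℝ Set.univ (fun x => f x - μ / 2 * ‖x‖ ^ 2) →
        ∀ (xstar : E), (∀ z, f xstar ≤ f z) →
        ∀ (ηx ηu θ : ℝ),
          ηx = 1 / Real.sqrt (μ * (L - μ)) →
          ηu = Real.sqrt (μ / (L - μ)) →
          θ = 1 / (1 + Real.sqrt (μ / (L - μ))) →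
        ∀ (x₀ : E) (x xl : ℕ → E),
          x 0 = x₀ → xl 0 = x₀ →
          (∀ k : ℕ, x (k + 1) = (1 + ηx * μ)⁻¹ •
            (x k - ηx • ((f' (xl k) - μ • xl k)
              + θ • ((f' (xl k) - μ • xl k) - (f' (xl (k - 1)) - μ • xl (k - 1)))))) →
          (∀ k : ℕ, xl (k + 1) = (1 + ηu)⁻¹ • (xl k + ηu • x (k + 1))) →
        ∀ K : ℕ,
          ‖xstar - x K‖ ^ 2
            ≤ C * Real.exp (-(K : ℝ) / (1 + 2 * Real.sqrt (L / μ - 1)))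
              * ‖xstar - x₀‖ ^ 2 := by
  obtain ⟨a, ha, rfl⟩ : ∃ a, 0 < a ∧ μ = a ^ 2 :=
    ⟨√μ, Real.sqrt_pos.2 hμ, (Real.sq_sqrt hμ.le).symm⟩
  obtain ⟨b, hb, rfl⟩ : ∃ b, 0 < b ∧ L = a ^ 2 + b ^ 2 :=
    ⟨√(L - a ^ 2), Real.sqrt_pos.2 (by linarith), by rw [Real.sq_sqrt (by linarith)]; ring⟩
  refine ⟨(a ^ 2 + b ^ 2) * (a + b) / a ^ 3, by positivity, ?_⟩
  intro f f' hf hLip hconv P hmin ηx ηu θ hηx hηu hθ x₀ x xl hx0 hxl0 hx hxl K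
  have hsqrt_mul : √(a ^ 2 * (a ^ 2 + b ^ 2 - a ^ 2)) = a * b := by
    rw [add_sub_cancel_left, ← mul_pow, Real.sqrt_sq (by positivity)]
  have hsqrt_div : √(a ^ 2 / (a ^ 2 + b ^ 2 - a ^ 2)) = a / b := by
    rw [add_sub_cancel_left, ← div_pow, Real.sqrt_sq (by positivity)]
  have hsqrt_div' : √((a ^ 2 + b ^ 2) / a ^ 2 - 1) = b / a := by
    rw [show (a ^ 2 + b ^ 2) / a ^ 2 - 1 = (b / a) ^ 2 by field_simp; ring,
      Real.sqrt_sq (by positivity)]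
  rw [hsqrt_mul] at hηx
  rw [hsqrt_div] at hηu hθ
  subst hηx hηu hθ
  have hθ : 1 / (1 + a / b) * (a + b) = b := by field_simp; ring
  have hP : f' P - a ^ 2 • P = -(a ^ 2) • P := by
    rw [IsLocalMin.hasGradientAt_eq_zero (Filter.Eventually.of_forall hmin) (hf P), zero_sub,
      neg_smul]
  have hrate := norm_sub_sq_le_pow_of_updates ha hb hθ
    (hconv.bregmanDiv_nonneg fun z => (hf z).sub (hasGradientAt_half_mul_norm_sq _ z))
    (bregmanDiv_sub_half_mul_norm_sq_le hf hLip) hP (hxl0.trans hx0.symm)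
    (fun k => smul_primal_update_eq ha hb (hx k)) (fun k => smul_lower_update_eq ha hb (hxl k)) K
  rw [norm_sub_rev, norm_sub_rev P, ← hx0, hsqrt_div']
  refine hrate.trans ?_
  gcongr
  exact pow_le_exp_of_mul_add_eq ha hb hθ K
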